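/- With G, C1, C2, α_1, α_2 as in the context (in particular G has no universal vertex), if α_1 = α_2 = 1 and |C1| ≥ 2 and |C2| ≥ 2, then G has a 2-tuple dominating set and γ×2(G) = 4. -/

import Mathlib

/-!
Since `α_i = 1`, the non-neighbor intervals of the vertices of `C_i` pairwise meet, so by Helly's
theorem for intervals some vertex `y_j` is non-adjacent to all of `C_i`, i.e. `N[y_j] ⊆ C_j`.
The closed neighborhoods of `y_1` and `y_2` are disjoint, so a `2`-tuple dominating set has two
vertices in each of them; conversely two vertices from each clique dominate every vertex twice.
-/

open Set

/-- The closed neighborhood `N[v]` of a vertex `v`: `v` together with its neighbors. -/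
def closedNbhd {V : Type*} (G : SimpleGraph V) (v : V) : Set V :=
  insert v {w | G.Adj v w}

/-- `D` is a `k`-tuple dominating set of `G`: every vertex has at least `k` members of `D`
in its closed neighborhood. -/
def IsKTupleDomSet {V : Type*} (G : SimpleGraph V) (k : ℕ) (D : Set V) : Prop :=
  ∀ v : V, k ≤ (closedNbhd G v ∩ D).ncard

/-- `γ×k(G)`: the minimum cardinality of a `k`-tuple dominating set of `G`. -/
noncomputable def gammaTuple {V : Type*} (G : SimpleGraph V) (k : ℕ) : ℕ :=
  sInf {n | ∃ D : Set V, IsKTupleDomSet G k D ∧ D.ncard = n}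

/-- A vertex is universal if its closed neighborhood is the whole vertex set. -/
def IsUniversalVertex {V : Type*} (G : SimpleGraph V) (u : V) : Prop :=
  closedNbhd G u = Set.univ

/-- The non-neighbor set `N̄(v) = V \ N[v]`. -/
def nonNbhd {V : Type*} (G : SimpleGraph V) (v : V) : Set V :=
  (closedNbhd G v)ᶜ

/-- `S` is a stable set of the auxiliary interval graph `H_i`: the non-neighbor sets of the
vertices of `S` are pairwise disjoint. -/
def IsC0PStable {V : Type*} (G : SimpleGraph V) (S : Set V) : Prop :=
  S.Pairwise fun u w => Disjoint (nonNbhd G u) (nonNbhd G w)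

def IsIntervalIn {α : Type*} [LinearOrder α] (B s : Set α) : Prop :=
  ∀ a ∈ B, ∀ b ∈ B, ∀ c ∈ B, a ≤ b → b ≤ c → a ∈ s → c ∈ s → b ∈ s

/-- Helly's theorem for intervals of a linear order. -/
theorem exists_forall_mem_of_pairwise_inter_nonempty {ι α : Type*} [LinearOrder α]
    {B : Set α} {A : Set ι} {s : ι → Set α} (hA : A.Finite) (hA₀ : A.Nonempty)
    (hfin : ∀ i ∈ A, (s i).Finite) (hsB : ∀ i ∈ A, s i ⊆ B) (hint : ∀ i ∈ A, IsIntervalIn B (s i))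
    (hpair : ∀ i ∈ A, ∀ j ∈ A, (s i ∩ s j).Nonempty) :
    ∃ y, ∀ i ∈ A, y ∈ s i := by
  have hmin : ∀ i ∈ A, ∃ m ∈ s i, ∀ x ∈ s i, m ≤ x := fun i hi =>
    (s i).exists_min_image id (hfin i hi) (by simpa using hpair i hi i hi)
  have : Nonempty α := let ⟨i, hi⟩ := hA₀; ⟨(hpair i hi i hi).some⟩
  choose! m hm_mem hm_le using hmin
  -- the largest of the left endpoints lies in every interval
  obtain ⟨i₀, hi₀, hi₀_max⟩ := A.exists_max_image m hA hA₀
  refine ⟨m i₀, fun j hj => ?_⟩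
  obtain ⟨z, hz₀, hzj⟩ := hpair i₀ hi₀ j hj
  exact hint j hj (m j) (hsB j hj (hm_mem j hj)) (m i₀) (hsB i₀ hi₀ (hm_mem i₀ hi₀)) z
    (hsB j hj hzj) (hi₀_max j hj) (hm_le i₀ hi₀ z hz₀) (hm_mem j hj) hzj

section Graph

variable {V : Type*} {G : SimpleGraph V}

lemma mem_closedNbhd_comm {u v : V} : u ∈ closedNbhd G v ↔ v ∈ closedNbhd G u := by
  simp only [closedNbhd, mem_insert_iff, mem_ofPred_eq, G.adj_comm]
  tauto

lemma mem_closedNbhd_of_isClique {C : Set V} (hC : G.IsClique C) {v w : V} (hv : v ∈ C)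
    (hw : w ∈ C) : w ∈ closedNbhd G v := by
  rcases eq_or_ne w v with rfl | hne
  · exact mem_insert _ _
  · exact mem_insert_of_mem _ (hC hv hw hne.symm)

lemma nonNbhd_subset_compl_of_isClique {C : Set V} (hC : G.IsClique C) {v : V} (hv : v ∈ C) :
    nonNbhd G v ⊆ Cᶜ := fun _ hw hwC => hw (mem_closedNbhd_of_isClique hC hv hwC)

lemma closedNbhd_subset_compl {A : Set V} {y : V} (hy : ∀ v ∈ A, y ∈ nonNbhd G v) :
    closedNbhd G y ⊆ Aᶜ := fun _ hx hxA => hy _ hxA (mem_closedNbhd_comm.mp hx)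

lemma inter_nonNbhd_nonempty_of_stable_le_one {A : Set V}
    (hα : 1 ∈ upperBounds {n | ∃ S : Set V, S ⊆ A ∧ IsC0PStable G S ∧ S.ncard = n})
    (hne : ∀ v ∈ A, (nonNbhd G v).Nonempty) {u w : V} (hu : u ∈ A) (hw : w ∈ A) :
    (nonNbhd G u ∩ nonNbhd G w).Nonempty := by
  rcases eq_or_ne u w with rfl | huw
  · simpa using hne u hu
  by_contra hdisj
  rw [not_nonempty_iff_eq_empty, ← disjoint_iff_inter_eq_empty] at hdisj
  have hstable : IsC0PStable G {u, w} := pairwise_pair.mpr fun _ => ⟨hdisj, hdisj.symm⟩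
  have := hα ⟨{u, w}, pair_subset hu hw, hstable, ncard_pair huw⟩
  omega

lemma exists_closedNbhd_subset [Finite V] [LinearOrder V] {C B : Set V} (hCB : IsCompl C B)
    (hC : G.IsClique C) (hC₀ : C.Nonempty)
    (hint : ∀ v ∈ C, (nonNbhd G v).Nonempty ∧ IsIntervalIn B (nonNbhd G v))
    (hα : 1 ∈ upperBounds {n | ∃ S : Set V, S ⊆ C ∧ IsC0PStable G S ∧ S.ncard = n}) :
    ∃ y, closedNbhd G y ⊆ B := by
  have hsub : ∀ v ∈ C, nonNbhd G v ⊆ B := fun v hv =>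
    hCB.compl_eq ▸ nonNbhd_subset_compl_of_isClique hC hv
  obtain ⟨y, hy⟩ := exists_forall_mem_of_pairwise_inter_nonempty C.toFinite hC₀
    (fun _ _ => toFinite _) hsub (fun v hv => (hint v hv).2)
    (fun _ hu _ hw => inter_nonNbhd_nonempty_of_stable_le_one hα (fun v hv => (hint v hv).1) hu hw)
  exact ⟨y, hCB.compl_eq ▸ closedNbhd_subset_compl hy⟩

lemma two_mul_le_ncard_of_disjoint_closedNbhd [Finite V] {k : ℕ} {D : Set V}
    (hD : IsKTupleDomSet G k D) {y₁ y₂ : V}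
    (hy : Disjoint (closedNbhd G y₁) (closedNbhd G y₂)) : 2 * k ≤ D.ncard :=
  calc 2 * k ≤ (closedNbhd G y₁ ∩ D).ncard + (closedNbhd G y₂ ∩ D).ncard := by
        linarith [hD y₁, hD y₂]
    _ = (closedNbhd G y₁ ∩ D ∪ closedNbhd G y₂ ∩ D).ncard :=
        (ncard_union_eq (hy.mono inter_subset_left inter_subset_left)).symm
    _ ≤ D.ncard :=
        ncard_le_ncard (union_subset inter_subset_right inter_subset_right)

lemma ncard_le_ncard_closedNbhd_inter_of_isClique [Finite V] {C T D : Set V}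
    (hC : G.IsClique C) (hTC : T ⊆ C) (hTD : T ⊆ D) {v : V} (hv : v ∈ C) :
    T.ncard ≤ (closedNbhd G v ∩ D).ncard :=
  ncard_le_ncard fun _ hw => ⟨mem_closedNbhd_of_isClique hC hv (hTC hw), hTD hw⟩

lemma exists_isKTupleDomSet_ncard_eq [Finite V] {C₁ C₂ : Set V} (hC : IsCompl C₁ C₂)
    (hC₁ : G.IsClique C₁) (hC₂ : G.IsClique C₂) {k : ℕ} (hk₁ : k ≤ C₁.ncard)
    (hk₂ : k ≤ C₂.ncard) : ∃ D, IsKTupleDomSet G k D ∧ D.ncard = 2 * k := by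
  obtain ⟨T₁, hT₁, hT₁k⟩ := exists_subset_card_eq hk₁
  obtain ⟨T₂, hT₂, hT₂k⟩ := exists_subset_card_eq hk₂
  refine ⟨T₁ ∪ T₂, fun v => ?_, ?_⟩
  · by_cases hv : v ∈ C₁
    · exact hT₁k ▸ ncard_le_ncard_closedNbhd_inter_of_isClique hC₁ hT₁ subset_union_left hv
    · exact hT₂k ▸ ncard_le_ncard_closedNbhd_inter_of_isClique hC₂ hT₂ subset_union_right
        (hC.compl_eq ▸ hv)
  · rw [ncard_union_eq (hC.disjoint.mono hT₁ hT₂), hT₁k, hT₂k]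
    ring

lemma gammaTuple_eq_ncard {D : Set V} {k : ℕ} (hD : IsKTupleDomSet G k D)
    (hmin : ∀ D', IsKTupleDomSet G k D' → D.ncard ≤ D'.ncard) : gammaTuple G k = D.ncard :=
  le_antisymm (Nat.sInf_le ⟨D, hD, rfl⟩)
    (le_csInf ⟨_, D, hD, rfl⟩ (by rintro _ ⟨D', hD', rfl⟩; exact hmin D' hD'))

end Graph

theorem stmt10_general {V : Type*} [Fintype V] [LinearOrder V] (G : SimpleGraph V) (C1 C2 : Set V)
    (hd12 : Disjoint C1 C2) (hunion : C1 ∪ C2 = Set.univ)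
    (hne1 : C1.Nonempty) (hne2 : C2.Nonempty)
    (hcl1 : G.IsClique C1) (hcl2 : G.IsClique C2)
    (hint1 : ∀ v ∈ C1, (nonNbhd G v).Nonempty ∧
      ∀ a ∈ C2, ∀ b ∈ C2, ∀ c ∈ C2, a ≤ b → b ≤ c →
        a ∈ nonNbhd G v → c ∈ nonNbhd G v → b ∈ nonNbhd G v)
    (hint2 : ∀ v ∈ C2, (nonNbhd G v).Nonempty ∧
      ∀ a ∈ C1, ∀ b ∈ C1, ∀ c ∈ C1, a ≤ b → b ≤ c →
        a ∈ nonNbhd G v → c ∈ nonNbhd G v → b ∈ nonNbhd G v)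
    (α1 α2 : ℕ)
    (hα1 : IsGreatest {n | ∃ S : Set V, S ⊆ C1 ∧ IsC0PStable G S ∧ S.ncard = n} α1)
    (hα2 : IsGreatest {n | ∃ S : Set V, S ⊆ C2 ∧ IsC0PStable G S ∧ S.ncard = n} α2)
    (h1 : α1 = 1) (h2 : α2 = 1) (hc1 : 2 ≤ C1.ncard) (hc2 : 2 ≤ C2.ncard) :
    (∃ D : Set V, IsKTupleDomSet G 2 D) ∧ gammaTuple G 2 = 4 := by
  subst h1 h2
  have hC : IsCompl C1 C2 := ⟨hd12, codisjoint_iff.mpr hunion⟩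
  obtain ⟨y₁, hy₁⟩ := exists_closedNbhd_subset hC.symm hcl2 hne2 hint2 hα2.2
  obtain ⟨y₂, hy₂⟩ := exists_closedNbhd_subset hC hcl1 hne1 hint1 hα1.2
  obtain ⟨D, hD, hcard⟩ := exists_isKTupleDomSet_ncard_eq hC hcl1 hcl2 hc1 hc2
  refine ⟨⟨D, hD⟩, ?_⟩
  rw [gammaTuple_eq_ncard hD fun D' hD' => hcard ▸ two_mul_le_ncard_of_disjoint_closedNbhd hD'
    (hd12.mono hy₁ hy₂), hcard]

/-- in a C0P-graph with no universal vertices, if `α1 = α2 = 1`, `|C1| ≥ 2` and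
`|C2| ≥ 2`, then `G` has a `2`-tuple dominating set and `γ×2(G) = 4`. -/
theorem stmt10 {V : Type*} [Fintype V] [LinearOrder V] (G : SimpleGraph V) (C1 C2 : Set V)
    (hd12 : Disjoint C1 C2) (hunion : C1 ∪ C2 = Set.univ)
    (hne1 : C1.Nonempty) (hne2 : C2.Nonempty)
    (hcl1 : G.IsClique C1) (hcl2 : G.IsClique C2)
    (hnouniv : ∀ v : V, ¬ IsUniversalVertex G v)
    (hint1 : ∀ v ∈ C1, (nonNbhd G v).Nonempty ∧
      ∀ a ∈ C2, ∀ b ∈ C2, ∀ c ∈ C2, a ≤ b → b ≤ c →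
        a ∈ nonNbhd G v → c ∈ nonNbhd G v → b ∈ nonNbhd G v)
    (hint2 : ∀ v ∈ C2, (nonNbhd G v).Nonempty ∧
      ∀ a ∈ C1, ∀ b ∈ C1, ∀ c ∈ C1, a ≤ b → b ≤ c →
        a ∈ nonNbhd G v → c ∈ nonNbhd G v → b ∈ nonNbhd G v)
    (α1 α2 : ℕ)
    (hα1 : IsGreatest {n | ∃ S : Set V, S ⊆ C1 ∧ IsC0PStable G S ∧ S.ncard = n} α1)
    (hα2 : IsGreatest {n | ∃ S : Set V, S ⊆ C2 ∧ IsC0PStable G S ∧ S.ncard = n} α2)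
    (h1 : α1 = 1) (h2 : α2 = 1) (hc1 : 2 ≤ C1.ncard) (hc2 : 2 ≤ C2.ncard) :
    (∃ D : Set V, IsKTupleDomSet G 2 D) ∧ gammaTuple G 2 = 4 :=
  stmt10_general G C1 C2 hd12 hunion hne1 hne2 hcl1 hcl2 hint1 hint2 α1 α2 hα1 hα2 h1 h2 hc1 hc2
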